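/- With the setup of the multi-fidelity estimator μ̂(α) = (1/n)∑_{i=1}^n X_i + α((1/(n+m))∑_{i=1}^{n+m} Y_i − (1/n)∑_{i=1}^n Y_i), and assuming Var(Y) > 0, the value α_opt = Cov(X,Y)/Var(Y) minimizes the variance of μ̂(α) over α ∈ ℝ, and the minimal variance equals (Var(X)/n)(1 − (m/(n+m))·Corr(X,Y)²). -/

import Mathlib

open MeasureTheory ProbabilityTheory Real Finset

/-- Covariance of two real random variables. -/
noncomputable def cov {Ω : Type*} [MeasurableSpace Ω] (X Y : Ω → ℝ) (μ : Measure Ω) : ℝ :=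
  ∫ ω, (X ω - ∫ x, X x ∂μ) * (Y ω - ∫ x, Y x ∂μ) ∂μ

/-- Correlation of two real random variables. -/
noncomputable def corr {Ω : Type*} [MeasurableSpace Ω] (X Y : Ω → ℝ) (μ : Measure Ω) : ℝ :=
  cov X Y μ / (Real.sqrt (variance X μ) * Real.sqrt (variance Y μ))

/-- The multi-fidelity Monte Carlo estimator. -/
noncomputable def mfEst {Ω : Type*} (n m : ℕ) (Xs Ys : ℕ → Ω → ℝ) (α : ℝ) : Ω → ℝ :=
  fun ω => (∑ i ∈ range n, Xs i ω) / n
    + α * ((∑ i ∈ range (n + m), Ys i ω) / (n + m) - (∑ i ∈ range n, Ys i ω) / n)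

/-!
Write the estimator as a sum of `n + m` independent terms `aᵢ Xᵢ + bᵢ Yᵢ`, where
`aᵢ = 1/n` for `i < n` and `0` otherwise, and `bᵢ = α (1/(n+m) - aᵢ)`. Each term has the law of
`aᵢ X + bᵢ Y` (for `i ≥ n` only the law of `Yᵢ` matters since `aᵢ = 0`), so summing the variances
gives `Var μ̂(α) = Var X / n + m / (n (n+m)) · (α² Var Y - 2 α Cov(X,Y))`. This quadratic in `α`
is minimised at `Cov(X,Y) / Var Y`, where it equals `-Cov(X,Y)² / Var Y`.
-/

section Moments

variable {Ω : Type*} [MeasurableSpace Ω] {μ : Measure Ω} {X Y : Ω → ℝ}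

lemma cov_eq_covariance (X Y : Ω → ℝ) (μ : Measure Ω) : cov X Y μ = covariance X Y μ := rfl

lemma variance_const_mul_add_const_mul [IsFiniteMeasure μ] (hX : MemLp X 2 μ)
    (hY : MemLp Y 2 μ) (a b : ℝ) :
    variance (fun ω => a * X ω + b * Y ω) μ
      = a ^ 2 * variance X μ + 2 * a * b * cov X Y μ + b ^ 2 * variance Y μ := by
  rw [variance_fun_add (hX.const_mul a) (hY.const_mul b), variance_const_mul, variance_const_mul,
    cov_eq_covariance, covariance_const_mul_left, covariance_const_mul_right]
  ring

lemma corr_sq (X Y : Ω → ℝ) (μ : Measure Ω) :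
    corr X Y μ ^ 2 = cov X Y μ ^ 2 / (variance X μ * variance Y μ) := by
  rw [corr, div_pow, mul_pow, sq_sqrt (variance_nonneg X μ), sq_sqrt (variance_nonneg Y μ)]

end Moments

section Quadratic

variable {v c : ℝ}

lemma quadratic_eval_div (hv : v ≠ 0) : (c / v) ^ 2 * v - 2 * (c / v) * c = -(c ^ 2 / v) := by
  field_simp
  ring

lemma neg_sq_div_le_quadratic (hv : 0 < v) (α : ℝ) : -(c ^ 2 / v) ≤ α ^ 2 * v - 2 * α * c := by
  have hsq : α ^ 2 * v - 2 * α * c + c ^ 2 / v = (α * v - c) ^ 2 / v := by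
    field_simp
    ring
  linarith [div_nonneg (sq_nonneg (α * v - c)) hv.le]

end Quadratic

section Weights

variable {Ω : Type*} (n m : ℕ)

noncomputable def mfWeightX (i : ℕ) : ℝ := if i < n then (n : ℝ)⁻¹ else 0

noncomputable def mfWeightY (α : ℝ) (i : ℕ) : ℝ := α * (((n : ℝ) + m)⁻¹ - mfWeightX n i)

lemma sum_range_add_ite_lt {β : Type*} [AddCommMonoid β] (f : ℕ → β) :
    ∑ i ∈ range (n + m), (if i < n then f i else 0) = ∑ i ∈ range n, f i := by
  rw [sum_range_add, sum_congr rfl fun i hi => if_pos (mem_range.1 hi),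
    sum_eq_zero fun i _ => if_neg (by omega), add_zero]

lemma sum_mfWeightX (hn : n ≠ 0) : ∑ i ∈ range (n + m), mfWeightX n i = 1 := by
  simp [mfWeightX, sum_range_add_ite_lt, hn]

lemma sum_mfWeightX_sq : ∑ i ∈ range (n + m), mfWeightX n i ^ 2 = (n : ℝ)⁻¹ := by
  simp only [mfWeightX, ite_pow, zero_pow two_ne_zero, sum_range_add_ite_lt, sum_const, card_range,
    nsmul_eq_mul]
  rcases eq_or_ne (n : ℝ) 0 with h | h
  · simp [h]
  · field_simp

lemma sum_mfWeight_quadratic (hn : n ≠ 0) (α a c b : ℝ) :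
    ∑ i ∈ range (n + m), (mfWeightX n i ^ 2 * a + 2 * mfWeightX n i * mfWeightY n m α i * c
        + mfWeightY n m α i ^ 2 * b)
      = a / n + m / (n * (n + m)) * (α ^ 2 * b - 2 * α * c) := by
  have hsplit : ∀ i, mfWeightX n i ^ 2 * a + 2 * mfWeightX n i * mfWeightY n m α i * c
        + mfWeightY n m α i ^ 2 * b
      = α ^ 2 * ((n : ℝ) + m)⁻¹ ^ 2 * b
        + 2 * α * ((n : ℝ) + m)⁻¹ * (c - α * b) * mfWeightX n i
        + (a - 2 * α * c + α ^ 2 * b) * mfWeightX n i ^ 2 := by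
    intro i; simp only [mfWeightY]; ring
  simp only [hsplit, sum_add_distrib, ← mul_sum, sum_const, card_range, nsmul_eq_mul,
    sum_mfWeightX n m hn, sum_mfWeightX_sq]
  have : (n : ℝ) ≠ 0 := by exact_mod_cast hn
  field_simp
  push_cast
  ring

lemma mfEst_eq_sum (Xs Ys : ℕ → Ω → ℝ) (α : ℝ) :
    mfEst n m Xs Ys α
      = ∑ i ∈ range (n + m), fun ω => mfWeightX n i * Xs i ω + mfWeightY n m α i * Ys i ω := by
  ext ω
  simp only [mfEst, Finset.sum_apply, sum_add_distrib, mfWeightY, mfWeightX, mul_sub, sub_mul,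
    sum_sub_distrib, mul_ite, mul_zero, ite_mul, zero_mul, sum_range_add_ite_lt, ← mul_sum]
  ring

end Weights

section Sampling

variable {Ω : Type*} [MeasurableSpace Ω] {μ : Measure Ω} {n m : ℕ} {X Y : Ω → ℝ}
  {Xs Ys : ℕ → Ω → ℝ}

lemma identDistrib_mfTerm {i : ℕ} (hXs : AEMeasurable (Xs i) μ) (hYs : AEMeasurable (Ys i) μ)
    (hX : AEMeasurable X μ) (hY : AEMeasurable Y μ)
    (hpair : i < n → Measure.map (fun ω => (Xs i ω, Ys i ω)) μ
      = Measure.map (fun ω => (X ω, Y ω)) μ)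
    (hYlaw : Measure.map (Ys i) μ = Measure.map Y μ) (α : ℝ) :
    IdentDistrib (fun ω => mfWeightX n i * Xs i ω + mfWeightY n m α i * Ys i ω)
      (fun ω => mfWeightX n i * X ω + mfWeightY n m α i * Y ω) μ μ := by
  by_cases hi : i < n
  · have hlin : Measurable fun p : ℝ × ℝ => mfWeightX n i * p.1 + mfWeightY n m α i * p.2 := by
      fun_prop
    exact (IdentDistrib.mk (hXs.prodMk hYs) (hX.prodMk hY) (hpair hi)).comp hlin
  · have hlin : Measurable fun y : ℝ => mfWeightY n m α i * y := by fun_prop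
    simp only [mfWeightX, hi, if_false, zero_mul, zero_add]
    exact (IdentDistrib.mk hYs hY hYlaw).comp hlin

theorem variance_mfEst [IsProbabilityMeasure μ] (hn : n ≠ 0)
    (hXs : ∀ i, Measurable (Xs i)) (hYs : ∀ i, Measurable (Ys i))
    (hX2 : MemLp X 2 μ) (hY2 : MemLp Y 2 μ)
    (hpair : ∀ i < n, Measure.map (fun ω => (Xs i ω, Ys i ω)) μ
        = Measure.map (fun ω => (X ω, Y ω)) μ)
    (hYlaw : ∀ i < n + m, Measure.map (Ys i) μ = Measure.map Y μ)
    (hindep : iIndepFun (fun i : Fin (n + m) => fun ω => (Xs i ω, Ys i ω)) μ) (α : ℝ) :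
    variance (mfEst n m Xs Ys α) μ
      = variance X μ / n + m / (n * (n + m)) * (α ^ 2 * variance Y μ - 2 * α * cov X Y μ) := by
  set Z : ℕ → Ω → ℝ := fun i ω => mfWeightX n i * Xs i ω + mfWeightY n m α i * Ys i ω
  have hlin : ∀ i, Measurable fun p : ℝ × ℝ => mfWeightX n i * p.1 + mfWeightY n m α i * p.2 :=
    fun i => by fun_prop
  have hZ : ∀ i ∈ range (n + m),
      IdentDistrib (Z i) (fun ω => mfWeightX n i * X ω + mfWeightY n m α i * Y ω) μ μ :=
    fun i hi => identDistrib_mfTerm (hXs i).aemeasurable (hYs i).aemeasurable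
      hX2.aemeasurable hY2.aemeasurable (hpair i) (hYlaw i (mem_range.1 hi)) α
  have hZ2 : ∀ i ∈ range (n + m), MemLp (Z i) 2 μ :=
    fun i hi => (hZ i hi).memLp_iff.2 ((hX2.const_mul _).add (hY2.const_mul _))
  have hZindep : Set.Pairwise ↑(range (n + m)) fun i j => Z i ⟂ᵢ[μ] Z j := by
    intro i hi j hj hij
    rw [coe_range, Set.mem_Iio] at hi hj
    exact (hindep.indepFun (i := ⟨i, hi⟩) (j := ⟨j, hj⟩) (by simpa [Fin.ext_iff] using hij)).comp
      (hlin i) (hlin j)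
  rw [mfEst_eq_sum, IndepFun.variance_sum hZ2 hZindep, ← sum_mfWeight_quadratic n m hn α]
  refine sum_congr rfl fun i hi => ?_
  rw [(hZ i hi).variance_eq, variance_const_mul_add_const_mul hX2 hY2]

end Sampling

theorem mfmc_optimal_alpha_general {Ω : Type*} [MeasurableSpace Ω] (μ : Measure Ω)
    [IsProbabilityMeasure μ]
    (n m : ℕ) (hn : 0 < n)
    (X Y : Ω → ℝ) (Xs Ys : ℕ → Ω → ℝ)
    (hXs : ∀ i, Measurable (Xs i)) (hYs : ∀ i, Measurable (Ys i))
    (hX2 : MemLp X 2 μ) (hY2 : MemLp Y 2 μ)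
    (hVarX : 0 < variance X μ) (hVarY : 0 < variance Y μ)
    (hpair : ∀ i < n, Measure.map (fun ω => (Xs i ω, Ys i ω)) μ
        = Measure.map (fun ω => (X ω, Y ω)) μ)
    (hYlaw : ∀ i < n + m, Measure.map (Ys i) μ = Measure.map Y μ)
    (hindep : iIndepFun
        (fun i : Fin (n + m) => fun ω => (Xs i ω, Ys i ω)) μ) :
    (∀ α : ℝ, variance (mfEst n m Xs Ys (cov X Y μ / variance Y μ)) μ
        ≤ variance (mfEst n m Xs Ys α) μ) ∧
    variance (mfEst n m Xs Ys (cov X Y μ / variance Y μ)) μ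
      = variance X μ / n * (1 - (m / (n + m)) * corr X Y μ ^ 2) := by
  have hvar := variance_mfEst hn.ne' hXs hYs hX2 hY2 hpair hYlaw hindep
  rw [hvar, quadratic_eval_div hVarY.ne']
  refine ⟨fun α => ?_, ?_⟩
  · rw [hvar]
    gcongr
    exact neg_sq_div_le_quadratic hVarY α
  · rw [corr_sq]
    field_simp
    ring

theorem mfmc_optimal_alpha {Ω : Type*} [MeasurableSpace Ω] (μ : Measure Ω)
    [IsProbabilityMeasure μ]
    (n m : ℕ) (hn : 0 < n) (hm : 0 < m)
    (X Y : Ω → ℝ) (Xs Ys : ℕ → Ω → ℝ)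
    (hX : Measurable X) (hY : Measurable Y)
    (hXs : ∀ i, Measurable (Xs i)) (hYs : ∀ i, Measurable (Ys i))
    (hX2 : MemLp X 2 μ) (hY2 : MemLp Y 2 μ)
    (hVarX : 0 < variance X μ) (hVarY : 0 < variance Y μ)
    (hpair : ∀ i < n, Measure.map (fun ω => (Xs i ω, Ys i ω)) μ
        = Measure.map (fun ω => (X ω, Y ω)) μ)
    (hYlaw : ∀ i < n + m, Measure.map (Ys i) μ = Measure.map Y μ)
    (hindep : iIndepFun
        (fun i : Fin (n + m) => fun ω => (Xs i ω, Ys i ω)) μ) :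
    (∀ α : ℝ, variance (mfEst n m Xs Ys (cov X Y μ / variance Y μ)) μ
        ≤ variance (mfEst n m Xs Ys α) μ) ∧
    variance (mfEst n m Xs Ys (cov X Y μ / variance Y μ)) μ
      = variance X μ / n * (1 - (m / (n + m)) * corr X Y μ ^ 2) :=
  mfmc_optimal_alpha_general μ n m hn X Y Xs Ys hXs hYs hX2 hY2 hVarX hVarY hpair hYlaw hindep
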